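/- Let φ be a CNF formula with variables x_1,…,x_n and clauses c_1,…,c_m in which each of the 2n literals x_i and ¬x_i occurs in at least one clause. Let G_φ be the finite simple graph on the 8n+m vertices {x_1,…,x_n, c_1,…,c_m, p_1,…,p_n, p̄_1,…,p̄_n, l_1,…,l_n, l̄_1,…,l̄_n, y_1,…,y_n, z_1,…,z_n, q_1,…,q_n, q̄_1,…,q̄_n} in which two distinct vertices are adjacent if and only if they belong together to one of the following sets: C_r = {c_1,…,c_m, p_1,…,p_n, p̄_1,…,p̄_n}; and for each 1 ≤ i ≤ n: C_{x_i} = {x_i, p_i, p̄_i}, C_{y_i} = {y_i, x_i}, C_{z_i} = {y_i, z_i}, C_{q_i} = {q_i, l_i}, C_{q̄_i} = {q̄_i, l̄_i}, C_{l_i} = {l_i, p_i} ∪ Cl(x_i), and C_{l̄_i} = {l̄_i, p̄_i} ∪ Cl(¬x_i), where Cl(x_i) (respectively Cl(¬x_i)) is the set of clause vertices c_j such that the literal x_i (respectively ¬x_i) occurs in clause c_j. Let S := {x_1,…,x_n, y_1,…,y_n} and X := {z_1,…,z_n, p_1,…,p_n, p̄_1,…,p̄_n, c_1,…,c_m}.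 Then φ has a satisfying assignment if and only if G_φ has a minimal dominating set D with S ⊆ D and D ∩ X = ∅. -/

import Mathlib

/-- The closed neighborhood `N[x]` of a vertex. -/
def closedNbhd {V : Type*} (G : SimpleGraph V) (x : V) : Set V := insert x (G.neighborSet x)

/-- `N[S] = ⋃ x ∈ S, N[x]`. -/
def closedNbhdSet {V : Type*} (G : SimpleGraph V) (S : Set V) : Set V :=
  ⋃ x ∈ S, closedNbhd G x

/-- `D` is a dominating set: `N[D] = V`. -/
def IsDomSet {V : Type*} (G : SimpleGraph V) (D : Set V) : Prop :=
  closedNbhdSet G D = Set.univ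

/-- Minimal dominating set: dominating, and no proper subset dominates. -/
def IsMinDomSet {V : Type*} (G : SimpleGraph V) (D : Set V) : Prop :=
  IsDomSet G D ∧ ∀ D' : Set V, D' ⊂ D → ¬ IsDomSet G D'

/-- The vertices of the gadget graph `G_φ`: variable vertices `x_i`, clause vertices
`c_j`, and the auxiliary vertices `p_i, p̄_i, l_i, l̄_i, y_i, z_i, q_i, q̄_i`. -/
inductive GVtx (n m : ℕ) : Type
  | xv (i : Fin n) | cv (j : Fin m) | pv (i : Fin n) | pbv (i : Fin n)
  | lv (i : Fin n) | lbv (i : Fin n) | yv (i : Fin n) | zv (i : Fin n)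
  | qv (i : Fin n) | qbv (i : Fin n)

namespace GVtx

variable {n m : ℕ}

/-- `C_r = {c_1,…,c_m, p_1,…,p_n, p̄_1,…,p̄_n}`. -/
def CrS (n m : ℕ) : Set (GVtx n m) :=
  {v | (∃ j, v = cv j) ∨ (∃ i, v = pv i) ∨ (∃ i, v = pbv i)}

/-- `C_{x_i} = {x_i, p_i, p̄_i}`. -/
def CxS (i : Fin n) : Set (GVtx n m) := {xv i, pv i, pbv i}

/-- `C_{y_i} = {y_i, x_i}`. -/
def CyS (i : Fin n) : Set (GVtx n m) := {yv i, xv i}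

/-- `C_{z_i} = {y_i, z_i}`. -/
def CzS (i : Fin n) : Set (GVtx n m) := {yv i, zv i}

/-- `C_{q_i} = {q_i, l_i}`. -/
def CqS (i : Fin n) : Set (GVtx n m) := {qv i, lv i}

/-- `C_{q̄_i} = {q̄_i, l̄_i}`. -/
def CqbS (i : Fin n) : Set (GVtx n m) := {qbv i, lbv i}

/-- `C_{l_i} = {l_i, p_i} ∪ Cl(x_i)`, where `Cl(x_i)` is the set of clause vertices
whose clause contains the positive literal `x_i`. -/
def ClS (cls : Fin m → Finset (Fin n × Bool)) (i : Fin n) : Set (GVtx n m) :=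
  {lv i, pv i} ∪ {v | ∃ j, v = cv j ∧ (i, true) ∈ cls j}

/-- `C_{l̄_i} = {l̄_i, p̄_i} ∪ Cl(¬x_i)`, where `Cl(¬x_i)` is the set of clause vertices
whose clause contains the negative literal `¬x_i`. -/
def ClbS (cls : Fin m → Finset (Fin n × Bool)) (i : Fin n) : Set (GVtx n m) :=
  {lbv i, pbv i} ∪ {v | ∃ j, v = cv j ∧ (i, false) ∈ cls j}

/-- `a` and `b` belong together to one of the listed sets. -/
def together (cls : Fin m → Finset (Fin n × Bool)) (a b : GVtx n m) : Prop :=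
  (a ∈ CrS n m ∧ b ∈ CrS n m) ∨
  ∃ i : Fin n,
    (a ∈ CxS i ∧ b ∈ CxS i) ∨ (a ∈ CyS i ∧ b ∈ CyS i) ∨ (a ∈ CzS i ∧ b ∈ CzS i) ∨
    (a ∈ CqS i ∧ b ∈ CqS i) ∨ (a ∈ CqbS i ∧ b ∈ CqbS i) ∨
    (a ∈ ClS cls i ∧ b ∈ ClS cls i) ∨ (a ∈ ClbS cls i ∧ b ∈ ClbS cls i)

/-- The gadget graph `G_φ`: two distinct vertices are adjacent iff they belong
together to one of the listed sets. -/
def gadget (cls : Fin m → Finset (Fin n × Bool)) : SimpleGraph (GVtx n m) :=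
  SimpleGraph.fromRel (together cls)

end GVtx

open GVtx

/-!
By Ore's characterization, a dominating set is minimal iff every vertex `d` of it has a private
neighbour, a vertex `v` with `N[v] ∩ D = {d}`.

A satisfying assignment `f` yields the dominating set formed by all `x_i, y_i`, the literal vertex
(`l_i` or `l̄_i`) of the literal that `f` makes true and the pendant vertex (`q̄_i` or `q_i`) of the
other one. It is minimal: the private neighbours are `z_i` for `y_i`, the vertex `p_i` or `p̄_i`
next to the false literal for `x_i`, and `q_i` or `q̄_i` for the remaining vertices.

Conversely, let `D` be minimal with `S ⊆ D` and `D ∩ X = ∅`. Every clause vertex `c_j` is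
dominated by a literal vertex of a literal of `c_j` lying in `D`, and `l_i, l̄_i` are never both in
`D`, so `x_i ↦ (l_i ∈ D)` satisfies every clause.
-/

section Domination

variable {V : Type*} {G : SimpleGraph V} {D : Set V} {u v : V}

lemma mem_closedNbhd_iff : v ∈ closedNbhd G u ↔ v = u ∨ G.Adj u v := Iff.rfl

lemma self_mem_closedNbhd : v ∈ closedNbhd G v := .inl rfl

lemma mem_closedNbhd_comm : v ∈ closedNbhd G u ↔ u ∈ closedNbhd G v := by
  simp only [mem_closedNbhd_iff, eq_comm, G.adj_comm]

lemma isDomSet_iff : IsDomSet G D ↔ ∀ v, ∃ d ∈ D, v ∈ closedNbhd G d := by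
  simp [IsDomSet, closedNbhdSet, Set.eq_univ_iff_forall]

lemma isMinDomSet_iff :
    IsMinDomSet G D ↔ IsDomSet G D ∧ ∀ d ∈ D, ∃ v, closedNbhd G v ∩ D = {d} := by
  refine and_congr_right fun hD => ⟨fun hmin d hd => ?_, fun hpriv D' hD' hdom => ?_⟩
  · obtain ⟨v, hv⟩ : ∃ v, ∀ d' ∈ D \ {d}, v ∉ closedNbhd G d' := by
      simpa [isDomSet_iff] using hmin _ (Set.sdiff_singleton_ssubset.2 hd)
    have hdom_only : ∀ d' ∈ closedNbhd G v ∩ D, d' = d := fun d' ⟨hvd', hd'⟩ => by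
      by_contra hne
      exact hv d' ⟨hd', hne⟩ (mem_closedNbhd_comm.1 hvd')
    obtain ⟨d', hd', hvd'⟩ := isDomSet_iff.1 hD v
    have hd'v : d' ∈ closedNbhd G v ∩ D := ⟨mem_closedNbhd_comm.1 hvd', hd'⟩
    exact ⟨v, Set.eq_singleton_iff_unique_mem.2 ⟨hdom_only d' hd'v ▸ hd'v, hdom_only⟩⟩
  · obtain ⟨d, hd, hdD'⟩ := Set.exists_of_ssubset hD'
    obtain ⟨v, hv⟩ := hpriv d hd
    obtain ⟨d', hd', hvd'⟩ := isDomSet_iff.1 hdom v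
    have hd'v : d' ∈ closedNbhd G v ∩ D := ⟨mem_closedNbhd_comm.1 hvd', hD'.subset hd'⟩
    rw [hv, Set.mem_singleton_iff] at hd'v
    exact hdD' (hd'v ▸ hd')

end Domination

namespace GVtx

variable {n m : ℕ} (cls : Fin m → Finset (Fin n × Bool))

lemma gadget_adj_iff {a b : GVtx n m} :
    (gadget cls).Adj a b ↔ a ≠ b ∧ together cls a b := by
  refine ⟨fun ⟨hne, h⟩ => ⟨hne, h.elim id fun h => ?_⟩, fun ⟨hne, h⟩ => ⟨hne, .inl h⟩⟩
  rcases h with ⟨ha, hb⟩ | ⟨i, h⟩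
  · exact .inl ⟨hb, ha⟩
  · exact .inr ⟨i, by tauto⟩

lemma mem_closedNbhd_gadget_iff {u v : GVtx n m} :
    v ∈ closedNbhd (gadget cls) u ↔ v = u ∨ together cls u v := by
  rw [mem_closedNbhd_iff, gadget_adj_iff]
  by_cases hvu : v = u
  · simp [hvu]
  · simp [hvu, Ne.symm hvu]

lemma closedNbhd_xv (i : Fin n) :
    closedNbhd (gadget cls) (xv i) = {xv i, yv i, pv i, pbv i} := by
  ext v
  cases v <;> simp [mem_closedNbhd_gadget_iff, together, CrS, CxS, CyS, CzS, CqS, CqbS, ClS, ClbS]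

lemma closedNbhd_zv (i : Fin n) : closedNbhd (gadget cls) (zv i) = {zv i, yv i} := by
  ext v
  cases v <;> simp [mem_closedNbhd_gadget_iff, together, CrS, CxS, CyS, CzS, CqS, CqbS, ClS, ClbS]

lemma closedNbhd_qv (i : Fin n) : closedNbhd (gadget cls) (qv i) = {qv i, lv i} := by
  ext v
  cases v <;> simp [mem_closedNbhd_gadget_iff, together, CrS, CxS, CyS, CzS, CqS, CqbS, ClS, ClbS]

lemma closedNbhd_qbv (i : Fin n) : closedNbhd (gadget cls) (qbv i) = {qbv i, lbv i} := by
  ext v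
  cases v <;> simp [mem_closedNbhd_gadget_iff, together, CrS, CxS, CyS, CzS, CqS, CqbS, ClS, ClbS]

lemma closedNbhd_pv_subset (i : Fin n) :
    closedNbhd (gadget cls) (pv i) ⊆ CrS n m ∪ {xv i, lv i} := by
  intro v
  cases v <;> simp [mem_closedNbhd_gadget_iff, together, CrS, CxS, CyS, CzS, CqS, CqbS, ClS, ClbS]

lemma closedNbhd_pbv_subset (i : Fin n) :
    closedNbhd (gadget cls) (pbv i) ⊆ CrS n m ∪ {xv i, lbv i} := by
  intro v
  cases v <;> simp [mem_closedNbhd_gadget_iff, together, CrS, CxS, CyS, CzS, CqS, CqbS, ClS, ClbS]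

lemma closedNbhd_cv_subset (j : Fin m) :
    closedNbhd (gadget cls) (cv j) ⊆ CrS n m ∪
      {v | ∃ i, v = lv i ∧ (i, true) ∈ cls j ∨ v = lbv i ∧ (i, false) ∈ cls j} := by
  intro v
  cases v <;> simp [mem_closedNbhd_gadget_iff, together, CrS, CxS, CyS, CzS, CqS, CqbS, ClS, ClbS]

lemma pv_mem_closedNbhd_lv (i : Fin n) : pv i ∈ closedNbhd (gadget cls) (lv i) :=
  (mem_closedNbhd_gadget_iff cls).2 (.inr (.inr ⟨i, by simp [CxS, CyS, CzS, CqS, CqbS, ClS]⟩))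

lemma pbv_mem_closedNbhd_lbv (i : Fin n) : pbv i ∈ closedNbhd (gadget cls) (lbv i) :=
  (mem_closedNbhd_gadget_iff cls).2
    (.inr (.inr ⟨i, by simp [CxS, CyS, CzS, CqS, CqbS, ClS, ClbS]⟩))

lemma cv_mem_closedNbhd_lv {i : Fin n} {j : Fin m} (h : (i, true) ∈ cls j) :
    cv j ∈ closedNbhd (gadget cls) (lv i) :=
  (mem_closedNbhd_gadget_iff cls).2
    (.inr (.inr ⟨i, by simp [CxS, CyS, CzS, CqS, CqbS, ClS, h]⟩))

lemma cv_mem_closedNbhd_lbv {i : Fin n} {j : Fin m} (h : (i, false) ∈ cls j) :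
    cv j ∈ closedNbhd (gadget cls) (lbv i) :=
  (mem_closedNbhd_gadget_iff cls).2
    (.inr (.inr ⟨i, by simp [CxS, CyS, CzS, CqS, CqbS, ClS, ClbS, h]⟩))

def assignmentDomSet (f : Fin n → Bool) : Set (GVtx n m) :=
  {v | match v with
    | xv _ | yv _ => True
    | lv i | qbv i => f i = true
    | lbv i | qv i => f i = false
    | _ => False}

variable {cls}

lemma isDomSet_assignmentDomSet {f : Fin n → Bool} (hf : ∀ j, ∃ p ∈ cls j, f p.1 = p.2) :
    IsDomSet (gadget cls) (assignmentDomSet f) := by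
  refine isDomSet_iff.2 fun v => ?_
  cases v with
  | xv i => exact ⟨xv i, trivial, self_mem_closedNbhd⟩
  | yv i => exact ⟨yv i, trivial, self_mem_closedNbhd⟩
  | zv i => exact ⟨yv i, trivial, mem_closedNbhd_comm.2 (by simp [closedNbhd_zv])⟩
  | pv i => exact ⟨xv i, trivial, by simp [closedNbhd_xv]⟩
  | pbv i => exact ⟨xv i, trivial, by simp [closedNbhd_xv]⟩
  | cv j =>
    obtain ⟨⟨i, b⟩, hij, hfi⟩ := hf j
    cases b
    · exact ⟨lbv i, hfi, cv_mem_closedNbhd_lbv cls hij⟩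
    · exact ⟨lv i, hfi, cv_mem_closedNbhd_lv cls hij⟩
  | lv i =>
    cases hfi : f i
    · exact ⟨qv i, hfi, by simp [closedNbhd_qv]⟩
    · exact ⟨lv i, hfi, self_mem_closedNbhd⟩
  | qv i =>
    cases hfi : f i
    · exact ⟨qv i, hfi, self_mem_closedNbhd⟩
    · exact ⟨lv i, hfi, mem_closedNbhd_comm.2 (by simp [closedNbhd_qv])⟩
  | lbv i =>
    cases hfi : f i
    · exact ⟨lbv i, hfi, self_mem_closedNbhd⟩
    · exact ⟨qbv i, hfi, by simp [closedNbhd_qbv]⟩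
  | qbv i =>
    cases hfi : f i
    · exact ⟨lbv i, hfi, mem_closedNbhd_comm.2 (by simp [closedNbhd_qbv])⟩
    · exact ⟨qbv i, hfi, self_mem_closedNbhd⟩

variable (cls)

lemma exists_closedNbhd_inter_assignmentDomSet_eq_singleton (f : Fin n → Bool) :
    ∀ d ∈ assignmentDomSet f, ∃ v, closedNbhd (gadget cls) v ∩ assignmentDomSet f = {d} := by
  intro d hd
  cases d with
  | xv i =>
    cases hfi : f i
    · refine ⟨pv i, Set.eq_singleton_iff_unique_mem.2
        ⟨⟨mem_closedNbhd_comm.2 (by simp [closedNbhd_xv]), trivial⟩, fun w ⟨hw, hwD⟩ => ?_⟩⟩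
      have := closedNbhd_pv_subset cls i hw
      cases w <;> simp_all [CrS, assignmentDomSet]
    · refine ⟨pbv i, Set.eq_singleton_iff_unique_mem.2
        ⟨⟨mem_closedNbhd_comm.2 (by simp [closedNbhd_xv]), trivial⟩, fun w ⟨hw, hwD⟩ => ?_⟩⟩
      have := closedNbhd_pbv_subset cls i hw
      cases w <;> simp_all [CrS, assignmentDomSet]
  | yv i =>
    refine ⟨zv i, ?_⟩
    rw [closedNbhd_zv]
    ext w; cases w <;> simp [assignmentDomSet]
  | lv i | qv i =>
    refine ⟨qv i, ?_⟩
    rw [closedNbhd_qv]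
    ext w; cases w <;> simp [assignmentDomSet] at hd ⊢ <;> aesop
  | lbv i | qbv i =>
    refine ⟨qbv i, ?_⟩
    rw [closedNbhd_qbv]
    ext w; cases w <;> simp [assignmentDomSet] at hd ⊢ <;> aesop
  | _ => exact hd.elim

/-- Otherwise `x_i` has no private neighbour: it is dominated by `y_i`, and its other neighbours
`p_i, p̄_i` by `l_i, l̄_i`. -/
lemma lbv_notMem_of_lv_mem {D : Set (GVtx n m)} {i : Fin n} (hD : IsMinDomSet (gadget cls) D)
    (hx : xv i ∈ D) (hy : yv i ∈ D) (hl : lv i ∈ D) : lbv i ∉ D := by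
  intro hlb
  obtain ⟨v, hv⟩ := (isMinDomSet_iff.1 hD).2 _ hx
  have hxv : v ∈ closedNbhd (gadget cls) (xv i) :=
    mem_closedNbhd_comm.1 (hv.symm ▸ rfl : xv i ∈ closedNbhd (gadget cls) v ∩ D).1
  obtain ⟨w, hw, hwx⟩ : ∃ w ∈ closedNbhd (gadget cls) v ∩ D, w ≠ xv i := by
    rw [closedNbhd_xv] at hxv
    rcases hxv with rfl | rfl | rfl | rfl
    · exact ⟨yv i, ⟨by simp [closedNbhd_xv], hy⟩, by simp⟩
    · exact ⟨yv i, ⟨self_mem_closedNbhd, hy⟩, by simp⟩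
    · exact ⟨lv i, ⟨mem_closedNbhd_comm.1 (pv_mem_closedNbhd_lv cls i), hl⟩, by simp⟩
    · exact ⟨lbv i, ⟨mem_closedNbhd_comm.1 (pbv_mem_closedNbhd_lbv cls i), hlb⟩, by simp⟩
  rw [hv] at hw
  exact hwx hw

lemma exists_literal_mem_of_isDomSet {D : Set (GVtx n m)} (hD : IsDomSet (gadget cls) D)
    (hCr : Disjoint (CrS n m) D) (j : Fin m) :
    ∃ i, lv i ∈ D ∧ (i, true) ∈ cls j ∨ lbv i ∈ D ∧ (i, false) ∈ cls j := by
  obtain ⟨d, hd, hjd⟩ := isDomSet_iff.1 hD (cv j)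
  rcases closedNbhd_cv_subset cls j (mem_closedNbhd_comm.1 hjd) with
    hCrd | ⟨i, ⟨rfl, hij⟩ | ⟨rfl, hij⟩⟩
  · exact (hCr.notMem_of_mem_left hCrd hd).elim
  · exact ⟨i, .inl ⟨hd, hij⟩⟩
  · exact ⟨i, .inr ⟨hd, hij⟩⟩

lemma satisfiable_of_isMinDomSet {D : Set (GVtx n m)} (hD : IsMinDomSet (gadget cls) D)
    (hx : ∀ i, xv i ∈ D) (hy : ∀ i, yv i ∈ D) (hCr : Disjoint (CrS n m) D) :
    ∃ f : Fin n → Bool, ∀ j, ∃ p ∈ cls j, f p.1 = p.2 := by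
  classical
  refine ⟨fun i => decide (lv i ∈ D), fun j => ?_⟩
  obtain ⟨i, ⟨hl, hij⟩ | ⟨hlb, hij⟩⟩ := exists_literal_mem_of_isDomSet cls hD.1 hCr j
  · exact ⟨(i, true), hij, by simpa using hl⟩
  · have hl : lv i ∉ D := fun hl => lbv_notMem_of_lv_mem cls hD (hx i) (hy i) hl hlb
    exact ⟨(i, false), hij, by simpa using hl⟩

end GVtx

theorem stmt8_general {n m : ℕ} (cls : Fin m → Finset (Fin n × Bool)) :
    (∃ f : Fin n → Bool, ∀ j, ∃ p ∈ cls j, f p.1 = p.2) ↔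
    (∃ D : Set (GVtx n m), IsMinDomSet (gadget cls) D ∧
      ({v | ∃ i, v = xv i} ∪ {v | ∃ i, v = yv i}) ⊆ D ∧
      D ∩ ({v | ∃ i, v = zv i} ∪ {v | ∃ i, v = pv i} ∪ {v | ∃ i, v = pbv i} ∪
        {v | ∃ j, v = cv j}) = ∅) := by
  constructor
  · rintro ⟨f, hf⟩
    refine ⟨assignmentDomSet f, isMinDomSet_iff.2 ⟨isDomSet_assignmentDomSet hf,
      exists_closedNbhd_inter_assignmentDomSet_eq_singleton cls f⟩, ?_, ?_⟩
    · rintro _ (⟨i, rfl⟩ | ⟨i, rfl⟩) <;> trivial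
    · ext v; cases v <;> simp [assignmentDomSet]
  · rintro ⟨D, hD, hS, hX⟩
    have hCr : Disjoint (CrS n m) D := Set.disjoint_left.2 fun v hCrv hv =>
      Set.eq_empty_iff_forall_notMem.1 hX v
        ⟨hv, by rcases hCrv with ⟨j, rfl⟩ | ⟨i, rfl⟩ | ⟨i, rfl⟩ <;> simp⟩
    exact satisfiable_of_isMinDomSet cls hD (fun i => hS (.inl ⟨i, rfl⟩))
      (fun i => hS (.inr ⟨i, rfl⟩)) hCr

/-- A CNF formula `φ` is encoded by its clauses `cls j`, each a nonempty finite set of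
literals, a literal being a pair `(i, b)` meaning `x_i` if `b = true` and `¬x_i` if
`b = false`; each of the `2n` literals occurs in at least one clause. Then `φ` is
satisfiable iff the gadget graph `G_φ` has a minimal dominating set `D` with
`S = {x_1,…,x_n, y_1,…,y_n} ⊆ D` and
`D ∩ X = ∅` for `X = {z_1,…,z_n, p_1,…,p_n, p̄_1,…,p̄_n, c_1,…,c_m}`. -/
theorem stmt8 {n m : ℕ} (cls : Fin m → Finset (Fin n × Bool))
    (hne : ∀ j, (cls j).Nonempty)
    (hocc : ∀ (i : Fin n) (b : Bool), ∃ j, (i, b) ∈ cls j) :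
    (∃ f : Fin n → Bool, ∀ j, ∃ p ∈ cls j, f p.1 = p.2) ↔
    (∃ D : Set (GVtx n m), IsMinDomSet (gadget cls) D ∧
      ({v | ∃ i, v = xv i} ∪ {v | ∃ i, v = yv i}) ⊆ D ∧
      D ∩ ({v | ∃ i, v = zv i} ∪ {v | ∃ i, v = pv i} ∪ {v | ∃ i, v = pbv i} ∪
        {v | ∃ j, v = cv j}) = ∅) :=
  stmt8_general cls
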